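/- Let W_1, W_2, ... be i.i.d. real random variables with common distribution P_0 symmetric about 0 (not depending on p). Define, for each p, π_j^{(p)} = (1 + #{k ∈ [p] : W_k ≤ -W_j})/p if W_j > 0 and 1 otherwise. Then for each fixed j and every t ∈ [0,1], limsup_{p→∞} P(π_j^{(p)} ≤ t) ≤ t. -/

import Mathlib

open MeasureTheory ProbabilityTheory Finset
open scoped ENNReal

/-!
Flipping the sign of `W_j` preserves the joint law of `(W_0, …, W_{p-1})` (symmetry and
independence), and on `{W_j > 0}` it turns the numerator `1 + #{k < p : W_k ≤ -W_j}` of `π_j^{(p)}`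
into the rank of the `j`-th coordinate among all `p`. The coordinates are exchangeable, so each
has rank `≤ r` with the same probability, and at most `r` of them can have rank `≤ r`; hence
that probability is at most `r / p`. With `r = ⌊t p⌋` this gives `P(π_j^{(p)} ≤ t) ≤ t` already
for every `p > j`.
-/

section Rank

variable {ι α : Type*} [Fintype ι] [LinearOrder α]

def rank (x : ι → α) (i : ι) : ℕ := #{k | x k ≤ x i}

theorem card_rank_le (x : ι → α) (r : ℕ) : #{i | rank x i ≤ r} ≤ r := by
  obtain h | ⟨i, hi, hmax⟩ := ({i | rank x i ≤ r} : Finset ι).eq_empty_or_nonempty.imp_right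
    fun h => exists_max_image _ x h
  · simp [h]
  · calc #{i | rank x i ≤ r} ≤ rank x i :=
          card_le_card fun k hk => mem_filter.2 ⟨mem_univ k, hmax k hk⟩
      _ ≤ r := (mem_filter.1 hi).2

theorem rank_comp_perm (x : ι → α) (σ : Equiv.Perm ι) (i : ι) :
    rank (x ∘ σ) i = rank x (σ i) := by
  simp only [rank, Function.comp_apply]
  exact card_bij' (fun k _ => σ k) (fun k _ => σ.symm k) (by simp) (by simp) (by simp) (by simp)

theorem rank_update_neg {G : Type*} [AddCommGroup G] [LinearOrder G] [IsOrderedAddMonoid G]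
    [DecidableEq ι] (x : ι → G) (i : ι) (hx : 0 < x i) :
    rank (Function.update x i (-x i)) i = #{k | x k ≤ -x i} + 1 := by
  have hi : i ∉ ({k | x k ≤ -x i} : Finset ι) := by simpa using neg_lt_self hx
  rw [← card_insert_of_notMem hi, rank]
  congr 1
  ext k
  rcases eq_or_ne k i with rfl | hk <;> simp [*]

end Rank

theorem measurableSet_rank_le {ι : Type*} [Fintype ι] (i : ι) (r : ℕ) :
    MeasurableSet {x : ι → ℝ | rank x i ≤ r} := by
  have : Measurable fun x : ι → ℝ => rank x i := by
    simp_rw [rank, card_filter]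
    exact Finset.measurable_sum _ fun k _ =>
      Measurable.ite (measurableSet_le (measurable_pi_apply k) (measurable_pi_apply i))
        measurable_const measurable_const
  exact this measurableSet_Iic

open Classical in
theorem sum_measure_le_of_forall_card_le {β ι : Type*} [MeasurableSpace β] {μ : Measure β}
    {s : Finset ι} {t : ι → Set β} (ht : ∀ i ∈ s, MeasurableSet (t i)) {r : ℕ}
    (hr : ∀ x, #{i ∈ s | x ∈ t i} ≤ r) : ∑ i ∈ s, μ (t i) ≤ r * μ Set.univ := by
  calc ∑ i ∈ s, μ (t i) = ∫⁻ x, ∑ i ∈ s, (t i).indicator 1 x ∂μ := by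
        rw [lintegral_finsetSum' _ fun i hi => (measurable_one.indicator (ht i hi)).aemeasurable]
        exact sum_congr rfl fun i hi => (lintegral_indicator_one (ht i hi)).symm
    _ ≤ ∫⁻ _, (r : ℝ≥0∞) ∂μ := lintegral_mono fun x => by
        simpa [Set.indicator_apply, ← sum_boole] using (Nat.cast_le (α := ℝ≥0∞)).2 (hr x)
    _ = r * μ Set.univ := lintegral_const _

theorem pi_measure_rank_le_eq {ι α : Type*} [Fintype ι] [LinearOrder α] [MeasurableSpace α]
    (P : Measure α) [SigmaFinite P] (i j : ι) (r : ℕ) :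
    Measure.pi (fun _ : ι => P) {x | rank x i ≤ r} =
      Measure.pi (fun _ : ι => P) {x | rank x j ≤ r} := by
  classical
  have hσ := measurePreserving_piCongrLeft (fun _ : ι => P) (Equiv.swap i j)
  have hpre : MeasurableEquiv.piCongrLeft (fun _ => α) (Equiv.swap i j) ⁻¹' {x | rank x j ≤ r}
      = {x | rank x i ≤ r} := by
    ext x
    have : MeasurableEquiv.piCongrLeft (fun _ => α) (Equiv.swap i j) x = x ∘ Equiv.swap i j := by
      ext k; simp [MeasurableEquiv.coe_piCongrLeft, Equiv.piCongrLeft_apply_eq_cast]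
    simp [this, rank_comp_perm]
  rw [← hpre, hσ.measure_preimage_equiv]

theorem card_mul_pi_measure_rank_le_le {ι : Type*} [Fintype ι] (P : Measure ℝ)
    [IsProbabilityMeasure P] (i : ι) (r : ℕ) :
    Fintype.card ι * Measure.pi (fun _ : ι => P) {x | rank x i ≤ r} ≤ r := by
  calc Fintype.card ι * Measure.pi (fun _ : ι => P) {x | rank x i ≤ r}
      = ∑ k, Measure.pi (fun _ : ι => P) {x | rank x k ≤ r} := by
        simp [pi_measure_rank_le_eq P _ i]
    _ ≤ r * Measure.pi (fun _ : ι => P) Set.univ :=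
        sum_measure_le_of_forall_card_le (fun k _ => measurableSet_rank_le k r)
          fun x => by simpa using card_rank_le x r
    _ = r := by simp

theorem pi_measure_rank_le_floor_le {ι : Type*} [Fintype ι] [Nonempty ι] (P : Measure ℝ)
    [IsProbabilityMeasure P] (i : ι) {t : ℝ} (ht : 0 ≤ t) :
    (Measure.pi (fun _ : ι => P) {x | rank x i ≤ ⌊t * Fintype.card ι⌋₊}).toReal ≤ t := by
  have hcard : (0 : ℝ) < Fintype.card ι := by exact_mod_cast Fintype.card_pos
  have h := ENNReal.toReal_mono (by simp) (card_mul_pi_measure_rank_le_le P i ⌊t * Fintype.card ι⌋₊)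
  rw [ENNReal.toReal_mul, ENNReal.toReal_natCast, ENNReal.toReal_natCast] at h
  rw [← mul_le_mul_iff_of_pos_left hcard, mul_comm _ t]
  exact h.trans (Nat.floor_le (by positivity))

theorem measurePreserving_update_neg {ι : Type*} [Fintype ι] [DecidableEq ι] {P : Measure ℝ}
    [SigmaFinite P] (hP : P.map (fun x => -x) = P) (i : ι) :
    MeasurePreserving (fun x : ι → ℝ => Function.update x i (-x i))
      (Measure.pi fun _ => P) (Measure.pi fun _ => P) := by
  have hneg : MeasurePreserving (fun x : ℝ => -x) P P := ⟨measurable_neg, hP⟩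
  convert measurePreserving_pi _ _ (f := fun k => if k = i then (fun y : ℝ => -y) else id)
    fun k => by split_ifs; exacts [hneg, .id P] using 1
  ext x k
  rcases eq_or_ne k i with rfl | hk <;> simp [*]

theorem ProbabilityTheory.iIndepFun.map_fin_eq_pi {Ω : Type*} [MeasurableSpace Ω] {μ : Measure Ω}
    [IsProbabilityMeasure μ] {W : ℕ → Ω → ℝ} (hW : ∀ i, Measurable (W i)) {P : Measure ℝ}
    (hind : iIndepFun W μ) (hlaw : ∀ i, μ.map (W i) = P) (p : ℕ) :
    μ.map (fun ω (i : Fin p) => W i ω) = Measure.pi fun _ => P := by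
  rw [(iIndepFun_iff_map_fun_eq_pi_map fun i : Fin p => (hW i).aemeasurable).1
    (hind.precomp Fin.val_injective)]
  simp [hlaw]

theorem ncard_setOf_lt_and_eq_card_fin (q : ℕ → Prop) [DecidablePred q] (p : ℕ) :
    {k | k < p ∧ q k}.ncard = #{i : Fin p | q i} := by
  rw [← card_map Fin.valEmbedding, ← Set.ncard_coe_finset]
  congr 1
  ext k
  simpa using ⟨fun h => ⟨⟨k, h.1⟩, h.2, rfl⟩, by rintro ⟨i, hi, rfl⟩; exact ⟨i.2, hi⟩⟩

/-- `π_j^{(p)}` evaluated at a realisation `w` of `(W_k)_k`. -/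
noncomputable def pValue (w : ℕ → ℝ) (j p : ℕ) : ℝ :=
  if 0 < w j then (1 + ({k | k < p ∧ w k ≤ -w j} : Set ℕ).ncard) / p else 1

theorem rank_update_neg_le_floor_of_pValue_le {w : ℕ → ℝ} {j p : ℕ} (hjp : j < p) {t : ℝ}
    (ht : t < 1) (h : pValue w j p ≤ t) :
    rank (Function.update (fun i : Fin p => w i) ⟨j, hjp⟩ (-w j)) ⟨j, hjp⟩ ≤ ⌊t * p⌋₊ := by
  have hp : (0 : ℝ) < p := by exact_mod_cast j.zero_le.trans_lt hjp
  have hpos : 0 < w j := by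
    by_contra hneg
    rw [pValue, if_neg hneg] at h
    linarith
  rw [pValue, if_pos hpos, div_le_iff₀ hp,
    ncard_setOf_lt_and_eq_card_fin (fun k => w k ≤ -w j)] at h
  rw [rank_update_neg (fun i : Fin p => w i) ⟨j, hjp⟩ hpos]
  exact Nat.le_floor (by push_cast; linarith)

/-- Asymptotic validity of the intermediate p-values (all-null case): if
`W_0, W_1, ...` are i.i.d. with common distribution `P₀` symmetric about `0`
(not depending on `p`), and
`π_j^{(p)} = (1 + #{k ∈ [p] : W_k ≤ -W_j})/p` if `W_j > 0`, else `1`,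
then for each fixed `j` and every `t ∈ [0,1]`,
`limsup_{p→∞} P(π_j^{(p)} ≤ t) ≤ t`. -/
theorem stmt_16 {Ω : Type*} [MeasurableSpace Ω] (μ : Measure Ω)
    [IsProbabilityMeasure μ] (W : ℕ → Ω → ℝ) (hW : ∀ i, Measurable (W i))
    (P₀ : Measure ℝ) [IsProbabilityMeasure P₀]
    (hiid : iIndepFun W μ)
    (hlaw : ∀ i, μ.map (W i) = P₀)
    (hsym : P₀.map (fun x => -x) = P₀)
    (j : ℕ) (t : ℝ) (ht0 : 0 ≤ t) (ht1 : t ≤ 1) :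
    let π : ℕ → Ω → ℝ := fun p ω =>
      if 0 < W j ω then
        (1 + (({k | k < p ∧ W k ω ≤ -W j ω} : Set ℕ).ncard : ℝ)) / p
      else 1
    Filter.limsup (fun p => (μ {ω | π p ω ≤ t}).toReal) Filter.atTop ≤ t := by
  intro π
  refine Filter.limsup_le_of_le (Filter.isCoboundedUnder_le_of_le _ fun _ => ENNReal.toReal_nonneg)
    (Filter.eventually_atTop.2 ⟨j + 1, fun p (hjp : j < p) => ?_⟩)
  obtain ht1 | rfl := ht1.lt_or_eq
  swap
  · exact measureReal_le_one
  let j' : Fin p := ⟨j, hjp⟩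
  have : Nonempty (Fin p) := ⟨j'⟩
  let flipped : Ω → Fin p → ℝ := fun ω => Function.update (fun i : Fin p => W i ω) j' (-W j ω)
  let B : Set (Fin p → ℝ) := {x | rank x j' ≤ ⌊t * Fintype.card (Fin p)⌋₊}
  have hflip : MeasurePreserving flipped μ (Measure.pi fun _ => P₀) :=
    (measurePreserving_update_neg hsym j').comp
      ⟨measurable_pi_iff.2 fun i => hW i, hiid.map_fin_eq_pi hW hlaw p⟩
  calc (μ {ω | π p ω ≤ t}).toReal
      ≤ (μ (flipped ⁻¹' B)).toReal :=
        ENNReal.toReal_mono (measure_ne_top _ _) <| measure_mono fun ω hω => by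
          simpa [B] using rank_update_neg_le_floor_of_pValue_le (w := fun k => W k ω) hjp ht1 hω
    _ = (Measure.pi (fun _ => P₀) B).toReal := by
        rw [hflip.measure_preimage (measurableSet_rank_le _ _).nullMeasurableSet]
    _ ≤ t := pi_measure_rank_le_floor_le P₀ j' ht0
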